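/- For every μ ∈ (0, √3·π/4) there exists a unique λ > 0 such that ∫₀^λ (φ(y) − φ(λ))² dy = μ. -/

import Mathlib

/-! The map `m(λ) = ∫₀^λ (φ − φ(λ))²` vanishes at `0`, is continuous, and is strictly increasing
on `λ > 0`, since raising `λ` lowers `φ(λ)`, which enlarges both the integrand and the domain.
As `φ` decreases and `λ φ(λ) → 0`, it is squeezed between `∫₀^λ φ² − 2 φ(0) λ φ(λ)` and
`∫₀^λ φ²`, so it tends to `∫₀^∞ φ² = √3π/4`; here `(√3/2) arctan (sinh (2x/√3))` is an
antiderivative of `φ²`. The intermediate value theorem and injectivity conclude. -/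

open Real MeasureTheory Set Filter

/-- The soliton `φ(x) = cosh(2x/√3)^(-1/2)`. -/
noncomputable def soliton (x : ℝ) : ℝ := (Real.cosh (2 * x / Real.sqrt 3)) ^ (-(1/2) : ℝ)

open Topology

noncomputable def shiftedMass (f : ℝ → ℝ) (l : ℝ) : ℝ := ∫ y in (0:ℝ)..l, (f y - f l) ^ 2

section ShiftedMass

variable {f : ℝ → ℝ}

@[simp]
lemma shiftedMass_zero : shiftedMass f 0 = 0 := intervalIntegral.integral_same

lemma continuous_shiftedMass (hf : Continuous f) : Continuous (shiftedMass f) :=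
  intervalIntegral.continuous_parametric_intervalIntegral_of_continuous
    (f := fun l y => (f y - f l) ^ 2) (by fun_prop) continuous_id

lemma shiftedMass_strictMonoOn (hf : Continuous f) (hanti : StrictAntiOn f (Ici 0)) :
    StrictMonoOn (shiftedMass f) (Ioi 0) := by
  intro a (ha : 0 < a) b _ hab
  have hba : f b < f a := hanti (mem_Ici.2 ha.le) (mem_Ici.2 (ha.trans hab).le) hab
  have hcont : ∀ c, Continuous fun y => (f y - f c) ^ 2 := fun c => by fun_prop
  have hlt : shiftedMass f a < ∫ y in (0:ℝ)..a, (f y - f b) ^ 2 := by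
    refine intervalIntegral.integral_lt_integral_of_continuousOn_of_le_of_exists_lt ha
      (hcont a).continuousOn (hcont b).continuousOn (fun y hy => ?_) ⟨a, ⟨ha.le, le_rfl⟩, ?_⟩
    · have hay : f a ≤ f y := hanti.antitoneOn hy.1.le (mem_Ici.2 ha.le) hy.2
      nlinarith
    · nlinarith
  have hle : ∫ y in (0:ℝ)..a, (f y - f b) ^ 2 ≤ shiftedMass f b :=
    intervalIntegral.integral_mono_interval le_rfl ha.le hab.le
      (Filter.Eventually.of_forall fun _ => sq_nonneg _) ((hcont b).intervalIntegrable _ _)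
  exact hlt.trans_le hle

lemma shiftedMass_le_integral_sq (hf : Continuous f) (hanti : AntitoneOn f (Ici 0))
    (hnonneg : ∀ x, 0 ≤ x → 0 ≤ f x) {l : ℝ} (hl : 0 ≤ l) :
    shiftedMass f l ≤ ∫ y in (0:ℝ)..l, f y ^ 2 :=
  intervalIntegral.integral_mono_on hl (Continuous.intervalIntegrable (by fun_prop) _ _)
    (Continuous.intervalIntegrable (by fun_prop) _ _) fun y hy => by
    have hly : f l ≤ f y := hanti hy.1 (mem_Ici.2 hl) hy.2
    nlinarith [hnonneg l hl]

lemma integral_sq_sub_le_shiftedMass (hf : Continuous f) (hanti : AntitoneOn f (Ici 0))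
    (hnonneg : ∀ x, 0 ≤ x → 0 ≤ f x) {l : ℝ} (hl : 0 ≤ l) :
    (∫ y in (0:ℝ)..l, f y ^ 2) - 2 * f 0 * (l * f l) ≤ shiftedMass f l := by
  have hmono : ∫ y in (0:ℝ)..l, (f y ^ 2 - 2 * f 0 * f l) ≤ shiftedMass f l :=
    intervalIntegral.integral_mono_on hl (Continuous.intervalIntegrable (by fun_prop) _ _)
      (Continuous.intervalIntegrable (by fun_prop) _ _) fun y hy => by
      have hy0 : f y ≤ f 0 := hanti (mem_Ici.2 le_rfl) hy.1 hy.1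
      nlinarith [hnonneg l hl]
  rw [intervalIntegral.integral_sub (Continuous.intervalIntegrable (by fun_prop) _ _)
    intervalIntegrable_const, intervalIntegral.integral_const, smul_eq_mul, sub_zero] at hmono
  linarith

lemma tendsto_shiftedMass (hf : Continuous f) (hanti : AntitoneOn f (Ici 0))
    (hnonneg : ∀ x, 0 ≤ x → 0 ≤ f x) {M : ℝ}
    (hM : Tendsto (fun l => ∫ y in (0:ℝ)..l, f y ^ 2) atTop (𝓝 M))
    (hdecay : Tendsto (fun l => l * f l) atTop (𝓝 0)) :
    Tendsto (shiftedMass f) atTop (𝓝 M) := by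
  have hlower :
      Tendsto (fun l => (∫ y in (0:ℝ)..l, f y ^ 2) - 2 * f 0 * (l * f l)) atTop (𝓝 M) := by
    simpa using hM.sub (hdecay.const_mul (2 * f 0))
  refine tendsto_of_tendsto_of_tendsto_of_le_of_le' hlower hM ?_ ?_ <;>
    filter_upwards [eventually_ge_atTop 0] with l hl
  exacts [integral_sq_sub_le_shiftedMass hf hanti hnonneg hl,
    shiftedMass_le_integral_sq hf hanti hnonneg hl]

lemma existsUnique_shiftedMass_eq (hf : Continuous f) (hanti : StrictAntiOn f (Ici 0))
    (hnonneg : ∀ x, 0 ≤ x → 0 ≤ f x) {M : ℝ}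
    (hM : Tendsto (fun l => ∫ y in (0:ℝ)..l, f y ^ 2) atTop (𝓝 M))
    (hdecay : Tendsto (fun l => l * f l) atTop (𝓝 0)) {μ : ℝ} (hμ : μ ∈ Ioo 0 M) :
    ∃! l, 0 < l ∧ shiftedMass f l = μ := by
  obtain ⟨T, hμT, hT⟩ :=
    (((tendsto_shiftedMass hf hanti.antitoneOn hnonneg hM hdecay).eventually_const_lt hμ.2).and
      (eventually_gt_atTop 0)).exists
  obtain ⟨l, hl, hlμ⟩ := intermediate_value_Ioo hT.le (continuous_shiftedMass hf).continuousOn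
    (by simpa using And.intro hμ.1 hμT)
  exact ⟨l, ⟨hl.1, hlμ⟩, fun l' hl' =>
    (shiftedMass_strictMonoOn hf hanti).injOn hl'.1 hl.1 (hl'.2.trans hlμ.symm)⟩

end ShiftedMass

lemma soliton_pos (x : ℝ) : 0 < soliton x := rpow_pos_of_pos (cosh_pos _) _

lemma continuous_soliton : Continuous soliton :=
  Continuous.rpow_const (by fun_prop) fun x => Or.inl (cosh_pos _).ne'

lemma soliton_strictAntiOn : StrictAntiOn soliton (Ici 0) := by
  intro a (ha : 0 ≤ a) b (hb : 0 ≤ b) hab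
  have h3 : 0 < √3 := by positivity
  refine rpow_lt_rpow_of_neg (cosh_pos _) (cosh_strictMonoOn ?_ ?_ ?_) (by norm_num)
  · exact mem_Ici.2 (by positivity)
  · exact mem_Ici.2 (by positivity)
  · gcongr

lemma soliton_sq (x : ℝ) : soliton x ^ 2 = (cosh (2 * x / √3))⁻¹ := by
  rw [soliton, ← rpow_natCast, ← rpow_mul (cosh_pos _).le]
  norm_num [rpow_neg_one]

lemma hasDerivAt_arctan_sinh (x : ℝ) :
    HasDerivAt (fun l => √3 / 2 * arctan (sinh (2 * l / √3))) (soliton x ^ 2) x := by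
  have hlin : HasDerivAt (fun l : ℝ => 2 * l / √3) (2 / √3) x := by
    simpa using ((hasDerivAt_id x).const_mul (2:ℝ)).div_const √3
  refine ((hlin.sinh.arctan).const_mul (√3 / 2)).congr_deriv ?_
  rw [soliton_sq, ← cosh_sq']
  have : 0 < √3 := by positivity
  field_simp [(cosh_pos (2 * x / √3)).ne']

lemma integral_soliton_sq (l : ℝ) :
    ∫ y in (0:ℝ)..l, soliton y ^ 2 = √3 / 2 * arctan (sinh (2 * l / √3)) := by
  rw [intervalIntegral.integral_eq_sub_of_hasDerivAt (fun x _ => hasDerivAt_arctan_sinh x)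
    ((continuous_soliton.pow 2).intervalIntegrable _ _)]
  simp

lemma tendsto_integral_soliton_sq :
    Tendsto (fun l => ∫ y in (0:ℝ)..l, soliton y ^ 2) atTop (𝓝 (√3 * π / 4)) := by
  have hlin : Tendsto (fun l : ℝ => 2 * l / √3) atTop atTop :=
    (tendsto_id.const_mul_atTop two_pos).atTop_div_const (by positivity)
  have hsinh : Tendsto sinh atTop atTop :=
    tendsto_atTop_mono' _ ((eventually_ge_atTop 0).mono fun x => self_le_sinh_iff.2) tendsto_id
  have harctan := (tendsto_arctan_atTop.mono_right nhdsWithin_le_nhds).comp (hsinh.comp hlin)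
  simp_rw [integral_soliton_sq]
  rw [show √3 * π / 4 = √3 / 2 * (π / 2) by ring]
  exact harctan.const_mul _

lemma soliton_le_sqrt_two_mul_exp (x : ℝ) : soliton x ≤ √2 * exp (-(1 / √3) * x) := by
  have hsq : soliton x ^ 2 ≤ (√2 * exp (-(1 / √3) * x)) ^ 2 := by
    have hexp : exp (2 * x / √3) / 2 ≤ cosh (2 * x / √3) := by
      rw [cosh_eq]; linarith [exp_pos (-(2 * x / √3))]
    calc soliton x ^ 2 = (cosh (2 * x / √3))⁻¹ := soliton_sq x
      _ ≤ (exp (2 * x / √3) / 2)⁻¹ := inv_anti₀ (by positivity) hexp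
      _ = (√2 * exp (-(1 / √3) * x)) ^ 2 := by
        rw [mul_pow, sq_sqrt zero_le_two, ← exp_nat_mul, inv_div, div_eq_mul_inv, ← exp_neg]
        ring_nf
  exact (pow_le_pow_iff_left₀ (soliton_pos x).le (by positivity) two_ne_zero).1 hsq

lemma tendsto_mul_soliton : Tendsto (fun l => l * soliton l) atTop (𝓝 0) := by
  have hexp :=
    (tendsto_rpow_mul_exp_neg_mul_atTop_nhds_zero 1 (1 / √3) (by positivity)).const_mul √2
  simp only [rpow_one, mul_zero] at hexp
  refine tendsto_of_tendsto_of_tendsto_of_le_of_le' tendsto_const_nhds hexp ?_ ?_ <;>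
    filter_upwards [eventually_ge_atTop 0] with l hl
  · exact mul_nonneg hl (soliton_pos l).le
  · nlinarith [soliton_le_sqrt_two_mul_exp l]

theorem stmt_12 (μ : ℝ) (hμ : μ ∈ Set.Ioo 0 (Real.sqrt 3 * Real.pi / 4)) :
    ∃! l : ℝ, 0 < l ∧ ∫ y in Set.Ioo (0:ℝ) l, (soliton y - soliton l) ^ 2 = μ := by
  refine (existsUnique_congr fun l => and_congr_right fun hl => ?_).1
    (existsUnique_shiftedMass_eq continuous_soliton soliton_strictAntiOn
      (fun x _ => (soliton_pos x).le) tendsto_integral_soliton_sq tendsto_mul_soliton hμ)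
  rw [shiftedMass, intervalIntegral.integral_of_le hl.le, integral_Ioc_eq_integral_Ioo]
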